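/- Let (X_n, X̂_n)_{n≥1} be a jointly distributed process on finite alphabets, let k ≥ 1, and for each n define vec P^k_{X̂^n|X^n}(x̂^n | x^n) = ∏_{i=1}^n P(x̂_i | x̂^{i−1}, x^{i−k}) using the conditional distributions induced by the joint law (terms with i ≤ k condition on x̂^{i−1} alone). Then for every N ≥ 1, the k-delay directed information satisfies Σ_{n=1}^N I(X̂^{n+k−1} ; X_n | X^{n−1}) = E [ log ( P_{X^N, X̂^N}(X^N, X̂^N) / ( vec P^k_{X̂^N|X^N}(X̂^N | X^N) · P_{X^N}(X^N) ) ) ], where the terms with n + k − 1 > N are interpreted with X̂^{n+k−1} replaced by X̂^N. -/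

import Mathlib

/-!
Write `M a b` for the probability of the prefixes `X^a = x^a, X̂^b = x̂^b`, so that
`M N 0 = P_{X^N}` and `M N N = P_{X^N, X̂^N}`; at an outcome of positive probability all these
values are positive. There the `n`-th summand of the directed information is the logarithm of
`M n (n+k-1) · M (n-1) 0 / (M (n-1) (n+k-1) · M n 0)` and the `i`-th factor of `vec P^k` is
`M (i-k) i / M (i-k) (i-1)`. The terms `M · 0` telescope to `-log P_{X^N}`. The remaining
increments of `log M`, in `a` at `b = a+k` and in `b` at `a = b+1-k`, alternate along a monotone
lattice path from `(0, 0)` to `(N, N+k-1)`, so they sum to `log M N (N+k-1) = log P_{X^N, X̂^N}`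
because `M a b` does not depend on `b ≥ N`.
-/

open Finset

section

variable {𝒳 𝒳h : Type} [Fintype 𝒳] [Fintype 𝒳h] [DecidableEq 𝒳] [DecidableEq 𝒳h]

/-- A jointly distributed process on `𝒳 × 𝒳̂`: a consistent family of probability
distributions on finite blocks of pairs. -/
def IsJointProcess (J : ∀ n : ℕ, (Fin n → 𝒳) → (Fin n → 𝒳h) → ℝ) : Prop :=
  (∀ n x xh, 0 ≤ J n x xh) ∧
    (∀ n, ∑ x : Fin n → 𝒳, ∑ xh : Fin n → 𝒳h, J n x xh = 1) ∧
    ∀ n (x : Fin n → 𝒳) (xh : Fin n → 𝒳h),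
      J n x xh = ∑ a : 𝒳, ∑ b : 𝒳h, J (n + 1) (Fin.snoc x a) (Fin.snoc xh b)

/-- Marginal probability, under a joint law `J` on `𝒳^n × 𝒳̂^n`, of observing the
values of `x` on the index set `S` and the values of `xh` on the index set `T`. -/
noncomputable def margin {n : ℕ} (J : (Fin n → 𝒳) → (Fin n → 𝒳h) → ℝ)
    (S T : Finset (Fin n)) (x : Fin n → 𝒳) (xh : Fin n → 𝒳h) : ℝ :=
  ∑ x' : Fin n → 𝒳, ∑ xh' : Fin n → 𝒳h,
    if (∀ i ∈ S, x' i = x i) ∧ (∀ i ∈ T, xh' i = xh i) then J x' xh' else 0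

/-- `vec P^k_{X̂^n|X^n}(x̂^n|x^n) = ∏_{i=1}^n P(x̂_i | x̂^{i-1}, x^{i-k})`, the product of
the `k`-delay conditional distributions induced by the joint law `J` (terms with
`i ≤ k` condition on `x̂^{i-1}` alone). -/
noncomputable def vecP {n : ℕ} (J : (Fin n → 𝒳) → (Fin n → 𝒳h) → ℝ) (k : ℕ)
    (x : Fin n → 𝒳) (xh : Fin n → 𝒳h) : ℝ :=
  ∏ t ∈ range n,
    margin J (univ.filter fun j => (j : ℕ) + k ≤ t) (univ.filter fun j => (j : ℕ) ≤ t) x xh /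
      margin J (univ.filter fun j => (j : ℕ) + k ≤ t) (univ.filter fun j => (j : ℕ) < t) x xh

/-- Probability of an event under a weight function on a finite outcome space. -/
noncomputable def prEvent {Ω : Type} [Fintype Ω] (w : Ω → ℝ) (s : Ω → Prop)
    [DecidablePred s] : ℝ :=
  ∑ ω, if s ω then w ω else 0

/-- Conditional mutual information `I(f ; g | h)` (in bits) of three finite-valued
random variables on a finite probability space with weights `w`. -/
noncomputable def cmi {Ω A B C : Type} [Fintype Ω]
    [DecidableEq A] [DecidableEq B] [DecidableEq C]
    (w : Ω → ℝ) (f : Ω → A) (g : Ω → B) (h : Ω → C) : ℝ :=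
  ∑ ω, w ω * Real.logb 2
    ((prEvent w (fun ω' => f ω' = f ω ∧ g ω' = g ω ∧ h ω' = h ω) *
        prEvent w (fun ω' => h ω' = h ω)) /
      (prEvent w (fun ω' => f ω' = f ω ∧ h ω' = h ω) *
        prEvent w (fun ω' => g ω' = g ω ∧ h ω' = h ω)))

/-- The two sums are the horizontal and the vertical increments of `m` along the lattice path
`(0, 0) → (0, k) → (1, k) → (1, k + 1) → (2, k + 1) → ⋯ → (N, N + k - 1)`. -/
theorem sum_staircase (m : ℕ → ℕ → ℝ) {k : ℕ} (hk : 1 ≤ k) (N : ℕ) :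
    ∑ t ∈ range N, (m (t + 1) (t + k) - m t (t + k)) +
        ∑ t ∈ range (N + (k - 1)), (m (t + 1 - k) (t + 1) - m (t + 1 - k) t) =
      m N (N + (k - 1)) - m 0 0 := by
  induction N with
  | zero =>
    rw [sum_range_zero, zero_add, zero_add, ← sum_range_sub (m 0)]
    refine sum_congr rfl fun t ht => ?_
    rw [mem_range] at ht
    rw [show t + 1 - k = 0 by omega]
  | succ N ih =>
    have hstep : N + 1 + (k - 1) = N + (k - 1) + 1 := by omega
    rw [sum_range_succ, hstep, sum_range_succ, show N + (k - 1) + 1 - k = N by omega,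
      show N + k = N + (k - 1) + 1 by omega]
    linarith

theorem sum_staircase_of_eq_of_le (m : ℕ → ℕ → ℝ) {k : ℕ} (hk : 1 ≤ k) (N : ℕ)
    (hm : ∀ a b, N ≤ b → m a b = m a N) :
    ∑ t ∈ range N, (m (t + 1) (t + k) - m t (t + k)) +
        ∑ t ∈ range N, (m (t + 1 - k) (t + 1) - m (t + 1 - k) t) =
      m N N - m 0 0 := by
  have htail :
      ∑ t ∈ range (k - 1), (m (N + t + 1 - k) (N + t + 1) - m (N + t + 1 - k) (N + t)) = 0 :=
    sum_eq_zero fun t _ => by rw [hm _ _ (by omega), hm _ (N + t) (by omega), sub_self]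
  rw [← hm N (N + (k - 1)) (by omega), ← sum_staircase m hk N, sum_range_add, htail, add_zero]

theorem sum_logb_cmi_ratio_eq (M : ℕ → ℕ → ℝ) {k : ℕ} (hk : 1 ≤ k) (N : ℕ)
    (hpos : ∀ a b, 0 < M a b) (hM : ∀ a b, N ≤ b → M a b = M a N) (h00 : M 0 0 = 1) :
    ∑ t ∈ range N, Real.logb 2 ((M (t + 1) (t + k) * M t 0) / (M t (t + k) * M (t + 1) 0)) =
      Real.logb 2 (M N N / ((∏ t ∈ range N, M (t + 1 - k) (t + 1) / M (t + 1 - k) t) * M N 0)) := by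
  set m : ℕ → ℕ → ℝ := fun a b => Real.logb 2 (M a b)
  have hne : ∀ a b, M a b ≠ 0 := fun a b => (hpos a b).ne'
  have hstair := sum_staircase_of_eq_of_le m hk N fun a b hb => by simp only [m, hM a b hb]
  have hcol := sum_range_sub (fun t => m t 0) N
  have hm00 : m 0 0 = 0 := by simp only [m, h00, Real.logb_one]
  have hprod : ∏ t ∈ range N, M (t + 1 - k) (t + 1) / M (t + 1 - k) t ≠ 0 :=
    prod_ne_zero_iff.2 fun t _ => div_ne_zero (hne _ _) (hne _ _)
  rw [Real.logb_div (hne _ _) (mul_ne_zero hprod (hne _ _)), Real.logb_mul hprod (hne _ _),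
    Real.logb_prod _ _ fun t _ => div_ne_zero (hne _ _) (hne _ _)]
  simp only [Real.logb_div (mul_ne_zero (hne _ _) (hne _ _)) (mul_ne_zero (hne _ _) (hne _ _)),
    Real.logb_mul (hne _ _) (hne _ _), Real.logb_div (hne _ _) (hne _ _)]
  simp only [sum_sub_distrib, sum_add_distrib] at hstair hcol ⊢
  linarith

theorem Fin.restrict_eq_iff {α : Type} {n m : ℕ} (h : ∀ j : Fin m, (j : ℕ) < n) {a b : Fin n → α} :
    ((fun j : Fin m => a ⟨(j : ℕ), h j⟩) = fun j : Fin m => b ⟨(j : ℕ), h j⟩) ↔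
      ∀ i : Fin n, (i : ℕ) < m → a i = b i :=
  ⟨fun H i hi => congrFun H ⟨i, hi⟩, fun H => funext fun j => H _ j.isLt⟩

theorem Fin.forall_val_lt_succ_iff {n : ℕ} {p : Fin n → Prop} (t : Fin n) :
    (∀ i : Fin n, (i : ℕ) < t + 1 → p i) ↔ p t ∧ ∀ i : Fin n, (i : ℕ) < t → p i := by
  refine ⟨fun H => ⟨H t t.val.lt_succ_self, fun i hi => H i (by omega)⟩, fun ⟨ht, H⟩ i hi => ?_⟩
  rcases (Nat.lt_succ_iff.1 hi).lt_or_eq with hlt | heq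
  · exact H i hlt
  · exact Fin.ext heq ▸ ht

theorem prEvent_congr {Ω : Type} [Fintype Ω] (w : Ω → ℝ) {s s' : Ω → Prop}
    [DecidablePred s] [DecidablePred s'] (h : ∀ ω, s ω ↔ s' ω) :
    prEvent w s = prEvent w s' :=
  sum_congr rfl fun ω _ => if_congr (h ω) rfl rfl

theorem le_margin {n : ℕ} (J : (Fin n → 𝒳) → (Fin n → 𝒳h) → ℝ)
    (h0 : ∀ x xh, 0 ≤ J x xh) (S T : Finset (Fin n)) (x : Fin n → 𝒳) (xh : Fin n → 𝒳h) :
    J x xh ≤ margin J S T x xh := by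
  have hterm : ∀ x' xh',
      0 ≤ if (∀ i ∈ S, x' i = x i) ∧ (∀ i ∈ T, xh' i = xh i) then J x' xh' else 0 :=
    fun x' xh' => by split_ifs <;> simp [h0]
  calc J x xh = if (∀ i ∈ S, x i = x i) ∧ (∀ i ∈ T, xh i = xh i) then J x xh else 0 := by simp
    _ ≤ ∑ xh', if (∀ i ∈ S, x i = x i) ∧ (∀ i ∈ T, xh' i = xh i) then J x xh' else 0 :=
      single_le_sum (fun xh' _ => hterm x xh') (mem_univ xh)
    _ ≤ margin J S T x xh :=
      single_le_sum (fun x' _ => sum_nonneg fun xh' _ => hterm x' xh') (mem_univ x)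

/-- `P(X^a = x^a, X̂^b = x̂^b)`, the indices being truncated at `n`. -/
noncomputable def prefixMargin {n : ℕ} (J : (Fin n → 𝒳) → (Fin n → 𝒳h) → ℝ) (a b : ℕ)
    (x : Fin n → 𝒳) (xh : Fin n → 𝒳h) : ℝ :=
  margin J (univ.filter fun j => (j : ℕ) < a) (univ.filter fun j => (j : ℕ) < b) x xh

section prefixMargin

variable {n : ℕ} (J : (Fin n → 𝒳) → (Fin n → 𝒳h) → ℝ) (x : Fin n → 𝒳) (xh : Fin n → 𝒳h)

theorem prEvent_eq_prefixMargin (a b : ℕ) (z : (Fin n → 𝒳) × (Fin n → 𝒳h)) :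
    prEvent (fun z' : (Fin n → 𝒳) × (Fin n → 𝒳h) => J z'.1 z'.2)
        (fun z' => (∀ i : Fin n, (i : ℕ) < a → z'.1 i = z.1 i) ∧
          ∀ i : Fin n, (i : ℕ) < b → z'.2 i = z.2 i) =
      prefixMargin J a b z.1 z.2 := by
  simp only [prefixMargin, margin, prEvent, Fintype.sum_prod_type, mem_filter, mem_univ, true_and]

theorem prefixMargin_of_le {a b : ℕ} (hb : n ≤ b) :
    prefixMargin J a b x xh = prefixMargin J a n x xh := by
  have hfilter :
      (univ.filter fun j : Fin n => (j : ℕ) < b) = univ.filter fun j : Fin n => (j : ℕ) < n := by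
    ext j
    simp only [mem_filter, mem_univ, true_and]
    omega
  rw [prefixMargin, hfilter, prefixMargin]

theorem prefixMargin_zero_zero : prefixMargin J 0 0 x xh = ∑ x', ∑ xh', J x' xh' := by
  simp [prefixMargin, margin]

theorem prefixMargin_self : prefixMargin J n n x xh = J x xh := by
  rw [prefixMargin, filter_true_of_mem fun j _ => j.isLt, margin]
  simp [← funext_iff, ite_and]

theorem margin_univ_empty : margin J univ ∅ x xh = prefixMargin J n 0 x xh := by
  simp [prefixMargin]

theorem vecP_eq_prod_prefixMargin (k : ℕ) :
    vecP J k x xh = ∏ t ∈ range n,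
      prefixMargin J (t + 1 - k) (t + 1) x xh / prefixMargin J (t + 1 - k) t x xh := by
  refine prod_congr rfl fun t _ => ?_
  simp only [prefixMargin]
  congr 2 <;> ext j <;> simp only [mem_filter, mem_univ, true_and] <;> omega

end prefixMargin

theorem cmi_eq_sum_logb_prefixMargin {N : ℕ} (J : (Fin N → 𝒳) → (Fin N → 𝒳h) → ℝ) (k : ℕ)
    (t : Fin N) :
    cmi (fun z : (Fin N → 𝒳) × (Fin N → 𝒳h) => J z.1 z.2)
        (fun z => fun j : Fin (min ((t : ℕ) + k) N) =>
          z.2 ⟨(j : ℕ), lt_of_lt_of_le j.isLt (min_le_right _ _)⟩)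
        (fun z => z.1 t)
        (fun z => fun j : Fin (t : ℕ) =>
          z.1 ⟨(j : ℕ), j.isLt.trans t.isLt⟩) =
      ∑ z : (Fin N → 𝒳) × (Fin N → 𝒳h), J z.1 z.2 * Real.logb 2
        ((prefixMargin J (t + 1) (t + k) z.1 z.2 * prefixMargin J t 0 z.1 z.2) /
          (prefixMargin J t (t + k) z.1 z.2 * prefixMargin J (t + 1) 0 z.1 z.2)) := by
  refine sum_congr rfl fun z _ => ?_
  simp only [← prEvent_eq_prefixMargin]
  congr 4 <;> refine prEvent_congr _ fun z' => ?_ <;>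
    simp only [Fin.restrict_eq_iff, lt_min_iff, Fin.is_lt, and_true, Fin.forall_val_lt_succ_iff,
      Nat.not_lt_zero, false_imp_iff, implies_true]
  all_goals exact and_comm

/-- **`k`-delay directed information as an expectation.**  For a jointly distributed
process on finite alphabets and any `N ≥ 1`,
`I_k(X̂^N → X^N) = Σ_{n=1}^N I(X̂^{min(n+k-1,N)} ; X_n | X^{n-1})` equals the
expectation of `log [ P_{X^N,X̂^N} / ( vec P^k_{X̂^N|X^N} · P_{X^N} ) ]` under the
joint law (with the convention `0 log 0 = 0`). -/
theorem kdelay_directed_info_as_expectation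
    (J : ∀ n : ℕ, (Fin n → 𝒳) → (Fin n → 𝒳h) → ℝ) (hJ : IsJointProcess J)
    (k : ℕ) (hk : 1 ≤ k) (N : ℕ) :
    ∑ t : Fin N,
        cmi (fun z : (Fin N → 𝒳) × (Fin N → 𝒳h) => J N z.1 z.2)
          -- `X̂^{min(n+k-1, N)}` for `n = t+1`
          (fun z => fun j : Fin (min ((t : ℕ) + k) N) =>
            z.2 ⟨(j : ℕ), lt_of_lt_of_le j.isLt (min_le_right _ _)⟩)
          -- `X_n`
          (fun z => z.1 t)
          -- `X^{n-1}`
          (fun z => fun j : Fin (t : ℕ) =>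
            z.1 ⟨(j : ℕ), by have h1 := j.isLt; have h2 := t.isLt; omega⟩) =
      ∑ x : Fin N → 𝒳, ∑ xh : Fin N → 𝒳h,
        J N x xh * Real.logb 2
          (J N x xh / (vecP (J N) k x xh * margin (J N) univ ∅ x xh)) := by
  obtain ⟨hJ0, hJ1, -⟩ := hJ
  simp only [cmi_eq_sum_logb_prefixMargin]
  rw [sum_comm, Fintype.sum_prod_type]
  refine sum_congr rfl fun x _ => sum_congr rfl fun xh _ => ?_
  rw [← mul_sum]
  rcases (hJ0 N x xh).eq_or_lt with hzero | hpos
  · rw [← hzero, zero_mul, zero_mul]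
  rw [vecP_eq_prod_prefixMargin, margin_univ_empty, ← prefixMargin_self (J N) x xh]
  congr 1
  exact (Fin.sum_univ_eq_sum_range _ N).trans <|
    sum_logb_cmi_ratio_eq (fun a b => prefixMargin (J N) a b x xh) hk N
      (fun a b => hpos.trans_le (le_margin (J N) (hJ0 N) _ _ x xh))
      (fun a b hb => prefixMargin_of_le (J N) x xh hb)
      (by rw [prefixMargin_zero_zero, hJ1])

end
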